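/- arXiv:1610.09371 — 2 statements merged into one kernel-verified Lean document; each statement's English description precedes it below -/
import Mathlib

section
/- The set of multisets of size 3 over products of two primes from {2,3,5,7,11,13} whose total product is divisible by 2·3·5·7·11·13 has exactly 15 elements, and every such multiset consists of three squarefree products of two distinct primes. -/
def Pset : Set ℕ := {2, 3, 5, 7, 11, 13}

def P2 : Set ℕ := {x | ∃ p ∈ Pset, ∃ q ∈ Pset, x = p * q}

def Vfin : Finset ℕ :=
  {4, 6, 10, 14, 22, 26, 9, 15, 21, 33, 39, 25, 35, 55, 65, 49, 77, 91, 121, 143, 169}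

def Sfin : Finset (Multiset ℕ) :=
  {{6, 35, 143}, {6, 55, 91}, {6, 65, 77}, {10, 21, 143}, {10, 33, 91}, {10, 39, 77},
   {14, 15, 143}, {14, 33, 65}, {14, 39, 55}, {22, 15, 91}, {22, 21, 65}, {22, 39, 35},
   {26, 15, 77}, {26, 21, 55}, {26, 33, 35}}

lemma memP2_iff (x : ℕ) : x ∈ P2 ↔ x ∈ Vfin := by
  constructor
  · rintro ⟨p, hp, q, hq, rfl⟩
    simp only [Pset, Set.mem_insert_iff, Set.mem_singleton_iff] at hp hq
    rcases hp with rfl | rfl | rfl | rfl | rfl | rfl <;>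
      rcases hq with rfl | rfl | rfl | rfl | rfl | rfl <;> decide
  · intro hx
    have h : ∀ y ∈ Vfin, ∃ p ∈ ({2,3,5,7,11,13} : Finset ℕ),
        ∃ q ∈ ({2,3,5,7,11,13} : Finset ℕ), y = p * q := by decide
    obtain ⟨p, hp, q, hq, hxe⟩ := h x hx
    exact ⟨p, by simpa [Pset, Set.mem_insert_iff] using hp,
           q, by simpa [Pset, Set.mem_insert_iff] using hq, hxe⟩

lemma key : ∀ a ∈ Vfin, ∀ b ∈ Vfin, ∀ c ∈ Vfin,
    30030 ∣ a * b * c → ({a, b, c} : Multiset ℕ) ∈ Sfin := by decide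

lemma setEq :
    {m : Multiset ℕ | Multiset.card m = 3 ∧ (∀ x ∈ m, x ∈ P2) ∧ 30030 ∣ m.prod} = ↑Sfin := by
  ext m
  simp only [Set.mem_setOf_eq, Finset.coe_sort_coe, Finset.mem_coe]
  constructor
  · rintro ⟨h3, hP, hd⟩
    obtain ⟨a, b, c, rfl⟩ := Multiset.card_eq_three.mp h3
    have ha := (memP2_iff a).mp (hP a (by simp))
    have hb := (memP2_iff b).mp (hP b (by simp))
    have hc := (memP2_iff c).mp (hP c (by simp))
    have hd' : 30030 ∣ a * b * c := by
      simpa [Multiset.prod_cons, mul_assoc] using hd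
    exact key a ha b hb c hc hd'
  · intro hm
    have h : ∀ m ∈ Sfin, Multiset.card m = 3 ∧ (∀ x ∈ m, x ∈ Vfin) ∧ 30030 ∣ m.prod := by
      decide
    obtain ⟨h1, h2, h3⟩ := h m hm
    exact ⟨h1, fun x hx => (memP2_iff x).mpr (h2 x hx), h3⟩

theorem stmt_2 :
    {m : Multiset ℕ | Multiset.card m = 3 ∧ (∀ x ∈ m, x ∈ P2) ∧ 30030 ∣ m.prod}.ncard = 15 ∧
    ∀ m : Multiset ℕ, Multiset.card m = 3 → (∀ x ∈ m, x ∈ P2) → 30030 ∣ m.prod →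
      ∀ x ∈ m, ∃ p ∈ Pset, ∃ q ∈ Pset, p ≠ q ∧ x = p * q := by
  constructor
  · rw [setEq, Set.ncard_coe_finset]
    decide
  · intro m h3 hP hd x hx
    have hm : m ∈ Sfin := by
      have := setEq
      have : m ∈ ({m : Multiset ℕ | Multiset.card m = 3 ∧ (∀ x ∈ m, x ∈ P2) ∧ 30030 ∣ m.prod}) :=
        ⟨h3, hP, hd⟩
      rw [setEq] at this
      exact this
    have h : ∀ m ∈ Sfin, ∀ x ∈ m, ∃ p ∈ ({2,3,5,7,11,13} : Finset ℕ),
        ∃ q ∈ ({2,3,5,7,11,13} : Finset ℕ), p ≠ q ∧ x = p * q := by decide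
    obtain ⟨p, hp, q, hq, hpq, hxe⟩ := h m hm x hx
    exact ⟨p, by simpa [Pset, Set.mem_insert_iff] using hp,
           q, by simpa [Pset, Set.mem_insert_iff] using hq, hpq, hxe⟩
end

section
/- The matrix A with rows (10,21,4), (10,14,9), (25,6,21), (21,6,35), representing the Mutando of Insanity, has at least one unordered pair of independent partial solutions with magic number 44100. -/
def A : Fin 4 → Fin 3 → ℕ := ![![10, 21, 4], ![10, 14, 9], ![25, 6, 21], ![21, 6, 35]]

def psol (s : Fin 4 → Fin 3) : Prop := ∏ i, A i (s i) = 44100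

theorem stmt_15 :
    ∃ s t : Fin 4 → Fin 3, psol s ∧ psol t ∧ ∀ i, s i ≠ t i := by
  refine ⟨![0, 0, 2, 0], ![1, 1, 0, 1], ?_, ?_, ?_⟩ <;> first | (unfold psol; decide) | decide
end
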